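/- arXiv:1212.1628 — 2 statements merged into one kernel-verified Lean document; each statement's English description precedes it below -/
import Mathlib

section
/- The quenched average of the flipped-disorder pressure difference under the F₀-interpolation vanishes: Av(X₀) = 0, where X₀ := P₀(0) − P₀(π). -/
open MeasureTheory ProbabilityTheory Real Finset
open scoped NNReal

noncomputable section

namespace InteractionFlip

variable {ι : Type*} [DecidableEq ι] {Ω : Type*} [MeasurableSpace Ω]

/-- The spin product `σ_X = ∏_{i ∈ X} σ_i` of a configuration `σ : Λ → {±1}`
(encoded via `Bool`, `true ↦ 1`, `false ↦ -1`; sites outside `Λ` contribute `1`). -/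
def sigmaX {Λ : Finset ι} (σ : ↥Λ → Bool) (X : Finset ι) : ℝ :=
  ∏ i ∈ X, (if h : i ∈ Λ then (if σ ⟨i, h⟩ then (1 : ℝ) else -1) else 1)

/-- `−∑_{∅ ≠ X ⊆ S} K_X σ_X`. -/
def hamOn {Λ : Finset ι} (K : Finset ι → ℝ) (S : Finset ι) (σ : ↥Λ → Bool) : ℝ :=
  -∑ X ∈ S.powerset.erase ∅, K X * sigmaX σ X

/-- `−∑_{X ⊆ Λ, X ⊄ Λ'} K_X σ_X`. -/
def hamOut (K : Finset ι → ℝ) (Λ Λ' : Finset ι) (σ : ↥Λ → Bool) : ℝ :=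
  -∑ X ∈ Λ.powerset.filter (fun X => ¬ X ⊆ Λ'), K X * sigmaX σ X

/-- The `F₀`-interpolating Hamiltonian
`X⁰_t(σ) = cos t · H⁰_{Λ'}(σ) + sin t · H̃⁰_{Λ'}(σ) + B_{Λ'}(σ) + H_{Λ∖Λ'}(σ)`. -/
def XF0 (J Jt : Finset ι → Ω → ℝ) (μ : Finset ι → ℝ) (Λ Λ' : Finset ι)
    (t : ℝ) (ω : Ω) (σ : ↥Λ → Bool) : ℝ :=
  Real.cos t * hamOn (fun X => J X ω - μ X) Λ' σ
    + Real.sin t * hamOn (fun X => Jt X ω - μ X) Λ' σ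
    + hamOn μ Λ' σ + hamOut (fun X => J X ω) Λ Λ' σ

/-- The random pressure `P₀(t) = ln ∑_σ exp(−β X⁰_t(σ))`. -/
def PF0 (J Jt : Finset ι → Ω → ℝ) (μ : Finset ι → ℝ) (Λ Λ' : Finset ι)
    (β t : ℝ) (ω : Ω) : ℝ :=
  Real.log (∑ σ : ↥Λ → Bool, Real.exp (-β * XF0 J Jt μ Λ Λ' t ω σ))

end InteractionFlip

open InteractionFlip

/-! At `t = 0` the interpolating Hamiltonian is the full Hamiltonian of the couplings `J`, and at
`t = π` it is the same Hamiltonian with every coupling inside `Λ'` reflected about its mean,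
`J_X ↦ 2 μ_X - J_X`. A Gaussian vector with independent coordinates is invariant in law under
such reflections, so `P₀(0)` and `P₀(π)` are identically distributed. Both are integrable, since
the pressure is bounded by `|Λ| log 2 + |β| ∑_X |J_X|`. -/

section

variable {E : Type*} [Fintype E] (m : E → ℝ) (v : E → ℝ≥0)

lemma integrable_pi_gaussianReal_sum_abs :
    Integrable (fun x : E → ℝ => ∑ i, |x i|) (Measure.pi fun i => gaussianReal (m i) (v i)) :=
  integrable_finsetSum _ fun i _ =>
    (integrable_comp_eval (i := i) (f := id)
      ((memLp_id_gaussianReal' 1 ENNReal.one_ne_top).integrable le_rfl)).abs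

lemma measurePreserving_pi_gaussianReal_reflect (p : E → Prop) [DecidablePred p] :
    MeasurePreserving (fun x i => if p i then 2 * m i - x i else x i)
      (Measure.pi fun i => gaussianReal (m i) (v i))
      (Measure.pi fun i => gaussianReal (m i) (v i)) := by
  refine measurePreserving_pi (f := fun i x => if p i then 2 * m i - x else x) _ _ fun i => ?_
  by_cases hi : p i
  · simp only [hi, if_true]
    refine ⟨by fun_prop, ?_⟩
    rw [gaussianReal_map_const_sub]
    congr 1
    ring
  · simp only [hi, if_false]
    exact MeasurePreserving.id _

end

lemma integral_sub_comp_eq_zero_of_hasLaw {Ω 𝓧 : Type*} {mΩ : MeasurableSpace Ω}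
    {m𝓧 : MeasurableSpace 𝓧} {P : Measure Ω} {ν : Measure 𝓧} {V W : Ω → 𝓧}
    (hV : HasLaw V ν P) (hW : HasLaw W ν P) {f : 𝓧 → ℝ} (hf : Integrable f ν) :
    ∫ ω, (f (V ω) - f (W ω)) ∂P = 0 := by
  have hfV : Integrable (fun ω => f (V ω)) P :=
    (hV.map_eq ▸ hf).comp_aemeasurable hV.aemeasurable
  have hfW : Integrable (fun ω => f (W ω)) P :=
    (hW.map_eq ▸ hf).comp_aemeasurable hW.aemeasurable
  rw [integral_sub hfV hfW, sub_eq_zero]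
  exact (hV.integral_comp hf.aestronglyMeasurable).trans
    (hW.integral_comp hf.aestronglyMeasurable).symm

lemma abs_log_sum_exp_le {α : Type*} [Fintype α] [Nonempty α] {f : α → ℝ} {C : ℝ}
    (hC : ∀ a, |f a| ≤ C) :
    |Real.log (∑ a, Real.exp (f a))| ≤ Real.log (Fintype.card α) + C := by
  have hcard : (1 : ℝ) ≤ Fintype.card α := by exact_mod_cast Fintype.card_pos
  have hsum_pos : 0 < ∑ a, Real.exp (f a) := by positivity
  rw [abs_le]
  constructor
  · obtain ⟨a⟩ := ‹Nonempty α›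
    have hlower : Real.exp (-C) ≤ ∑ a, Real.exp (f a) :=
      (Real.exp_le_exp.mpr (abs_le.mp (hC a)).1).trans
        (Finset.single_le_sum (fun a _ => (Real.exp_pos (f a)).le) (Finset.mem_univ a))
    have := Real.log_le_log (Real.exp_pos _) hlower
    rw [Real.log_exp] at this
    linarith [Real.log_nonneg hcard]
  · have hupper : ∑ a, Real.exp (f a) ≤ Fintype.card α * Real.exp C := by
      simpa using Finset.sum_le_sum fun a (_ : a ∈ Finset.univ) =>
        Real.exp_le_exp.mpr (abs_le.mp (hC a)).2
    have := Real.log_le_log hsum_pos hupper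
    rwa [Real.log_mul (by positivity) (Real.exp_ne_zero _), Real.log_exp] at this

namespace InteractionFlip

variable {ι : Type*} [DecidableEq ι]

abbrev Bonds (Λ : Finset ι) := ↥(Λ.powerset.erase ∅)

def pressure (Λ : Finset ι) (β : ℝ) (K : Bonds Λ → ℝ) : ℝ :=
  Real.log (∑ σ : ↥Λ → Bool, Real.exp (β * ∑ X, K X * sigmaX σ X))

lemma abs_sigmaX_le_one {Λ : Finset ι} (σ : ↥Λ → Bool) (X : Finset ι) : |sigmaX σ X| ≤ 1 := by
  rw [sigmaX, Finset.abs_prod]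
  exact Finset.prod_le_one (fun _ _ => abs_nonneg _) fun i _ => by split_ifs <;> simp

lemma abs_pressure_le (Λ : Finset ι) (β : ℝ) (K : Bonds Λ → ℝ) :
    |pressure Λ β K| ≤ Real.log (Fintype.card (↥Λ → Bool)) + |β| * ∑ X, |K X| := by
  refine abs_log_sum_exp_le fun σ => ?_
  rw [abs_mul]
  gcongr
  refine (Finset.abs_sum_le_sum_abs _ _).trans (Finset.sum_le_sum fun X _ => ?_)
  rw [abs_mul]
  exact mul_le_of_le_one_right (abs_nonneg _) (abs_sigmaX_le_one σ X)

lemma integrable_pressure (Λ : Finset ι) (β : ℝ) (m : Bonds Λ → ℝ) (v : Bonds Λ → ℝ≥0) :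
    Integrable (pressure Λ β) (Measure.pi fun X => gaussianReal (m X) (v X)) := by
  refine Integrable.mono' ((integrable_const _).add
    ((integrable_pi_gaussianReal_sum_abs m v).const_mul |β|)) ?_
    (Filter.Eventually.of_forall (abs_pressure_le Λ β))
  exact Measurable.aestronglyMeasurable (by unfold pressure; fun_prop)

section Hamiltonian

variable {Λ Λ' : Finset ι}

lemma hamOn_add_hamOut (hsub : Λ' ⊆ Λ) (K : Finset ι → ℝ) (σ : ↥Λ → Bool) :
    hamOn K Λ' σ + hamOut K Λ Λ' σ = hamOn K Λ σ := by
  have hin : (Λ.powerset.erase ∅).filter (· ⊆ Λ') = Λ'.powerset.erase ∅ := by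
    ext X
    simp only [Finset.mem_filter, Finset.mem_erase, Finset.mem_powerset]
    exact ⟨fun h => ⟨h.1.1, h.2⟩, fun h => ⟨⟨h.1, h.2.trans hsub⟩, h.2⟩⟩
  have hout : (Λ.powerset.erase ∅).filter (¬ · ⊆ Λ') = Λ.powerset.filter (¬ · ⊆ Λ') := by
    ext X
    simp only [Finset.mem_filter, Finset.mem_erase, Finset.mem_powerset]
    refine ⟨fun h => ⟨h.1.2, h.2⟩, fun h => ⟨⟨?_, h.1⟩, h.2⟩⟩
    rintro rfl
    exact h.2 (Finset.empty_subset _)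
  rw [hamOn, hamOn, hamOut, ← hin, ← hout, ← neg_add, Finset.sum_filter_add_sum_filter_not]

lemma hamOn_eq_neg_sum_bonds (K : Finset ι → ℝ) (σ : ↥Λ → Bool) :
    hamOn K Λ σ = -∑ X : Bonds Λ, K X * sigmaX σ X := by
  rw [hamOn, ← Finset.sum_coe_sort]

lemma PF0_eq_pressure {Ω : Type*} {J Jt : Finset ι → Ω → ℝ} {μ : Finset ι → ℝ} {ω : Ω}
    {β t : ℝ} {K : Finset ι → ℝ}
    (hK : ∀ σ, XF0 J Jt μ Λ Λ' t ω σ = hamOn K Λ σ) :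
    PF0 J Jt μ Λ Λ' β t ω = pressure Λ β (fun X => K X) := by
  simp only [PF0, pressure, hK, hamOn_eq_neg_sum_bonds, mul_neg, neg_mul, neg_neg]

variable {Ω : Type*} (J Jt : Finset ι → Ω → ℝ) (μ : Finset ι → ℝ) (ω : Ω)

lemma XF0_zero (hsub : Λ' ⊆ Λ) (σ : ↥Λ → Bool) :
    XF0 J Jt μ Λ Λ' 0 ω σ = hamOn (J · ω) Λ σ := by
  rw [← hamOn_add_hamOut hsub, XF0, Real.cos_zero, Real.sin_zero, one_mul, zero_mul, add_zero]
  congr 1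
  simp only [hamOn, ← neg_add, ← Finset.sum_add_distrib, ← add_mul, sub_add_cancel]

lemma XF0_pi (hsub : Λ' ⊆ Λ) (σ : ↥Λ → Bool) :
    XF0 J Jt μ Λ Λ' π ω σ =
      hamOn (fun X => if X ⊆ Λ' then 2 * μ X - J X ω else J X ω) Λ σ := by
  rw [← hamOn_add_hamOut hsub, XF0, Real.cos_pi, Real.sin_pi, neg_one_mul, zero_mul, add_zero]
  congr 1
  · simp only [hamOn, neg_neg, ← Finset.sum_neg_distrib, ← Finset.sum_add_distrib]
    refine Finset.sum_congr rfl fun X hX => ?_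
    rw [if_pos (Finset.mem_powerset.mp (Finset.mem_of_mem_erase hX))]
    ring
  · exact congrArg Neg.neg (Finset.sum_congr rfl fun X hX => by
      simp only [if_neg (Finset.mem_filter.mp hX).2])

end Hamiltonian

end InteractionFlip

theorem statement0_general
    {ι : Type*} [DecidableEq ι] {Ω : Type*} [MeasurableSpace Ω]
    (P : Measure Ω) [IsProbabilityMeasure P]
    (Λ Λ' : Finset ι) (hsub : Λ' ⊆ Λ)
    (μ : Finset ι → ℝ) (Δ2 : Finset ι → ℝ≥0)
    (J Jt : Finset ι → Ω → ℝ)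
    (hJ : ∀ X ∈ Λ.powerset.erase ∅, P.map (J X) = gaussianReal (μ X) (Δ2 X))
    (hindep : iIndepFun
      (fun p : ↥(Λ.powerset.erase ∅) × Bool =>
        fun ω => if p.2 then Jt p.1.1 ω else J p.1.1 ω) P)
    (β : ℝ) :
    ∫ ω, (PF0 J Jt μ Λ Λ' β 0 ω - PF0 J Jt μ Λ Λ' β π ω) ∂P = 0 := by
  have hlaw : HasLaw (fun ω (X : Bonds Λ) => J X ω)
      (Measure.pi fun X : Bonds Λ => gaussianReal (μ X) (Δ2 X)) P := by
    refine iIndepFun.hasLaw_pi (fun X => ⟨?_, hJ X X.2⟩)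
      (hindep.precomp (g := fun X => (X, false)) fun X Y h => (Prod.mk.inj h).1)
    exact aemeasurable_of_map_neZero (by rw [hJ X X.2]; infer_instance)
  have hreflect := (measurePreserving_pi_gaussianReal_reflect (fun X : Bonds Λ => μ X)
    (fun X => Δ2 X) (fun X => X.1 ⊆ Λ')).comp_hasLaw hlaw
  simp_rw [PF0_eq_pressure (XF0_zero J Jt μ _ hsub),
    PF0_eq_pressure (XF0_pi J Jt μ _ hsub)]
  exact integral_sub_comp_eq_zero_of_hasLaw hlaw hreflect (integrable_pressure Λ β _ _)

/-- under the `F₀`-interpolation, `Av(X₀) = 0` where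
`X₀ = P₀(0) − P₀(π)`. -/
theorem statement0
    {ι : Type*} [DecidableEq ι] {Ω : Type*} [MeasurableSpace Ω]
    (P : Measure Ω) [IsProbabilityMeasure P]
    (Λ Λ' : Finset ι) (hΛ : Λ.Nonempty) (hsub : Λ' ⊆ Λ)
    (μ : Finset ι → ℝ) (Δ2 : Finset ι → ℝ≥0)
    (J Jt : Finset ι → Ω → ℝ)
    (hJ : ∀ X ∈ Λ.powerset.erase ∅, P.map (J X) = gaussianReal (μ X) (Δ2 X))
    (hJt : ∀ X ∈ Λ.powerset.erase ∅, P.map (Jt X) = gaussianReal (μ X) (Δ2 X))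
    (hindep : iIndepFun
      (fun p : ↥(Λ.powerset.erase ∅) × Bool =>
        fun ω => if p.2 then Jt p.1.1 ω else J p.1.1 ω) P)
    (β : ℝ) (hβ : 0 < β) :
    ∫ ω, (PF0 J Jt μ Λ Λ' β 0 ω - PF0 J Jt μ Λ Λ' β π ω) ∂P = 0 :=
  statement0_general P Λ Λ' hsub μ Δ2 J Jt hJ hindep β
end
end

section
/- Truncated-correlation structure of the replicon polynomial: for any two random Gibbs states ω_t, ω_s on {−1,+1}^Λ and the normalized covariance c(σ,τ) := C_{Λ'}(σ,τ)/|Λ'|, one has the deterministic identity ω_t⊗ω_s(c(σ¹,σ²)²) − ω_s⊗ω_t⊗ω_s(c(σ¹,σ²)c(σ²,σ³)) − ω_t⊗ω_s⊗ω_t(c(σ¹,σ²)c(σ²,σ³)) + ω_t⊗ω_s⊗ω_s⊗ω_t(c(σ¹,σ²)c(σ³,σ⁴)) = (1/|Λ'|²) ∑_{∅≠X⊆Λ'} ∑_{∅≠Y⊆Λ'} Δ_X²Δ_Y² [ω_t(σ_Xσ_Y) − ω_t(σ_X)ω_t(σ_Y)][ω_s(σ_Xσ_Y) − ω_s(σ_X)ω_s(σ_Y)],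 where ω_{t₁}⊗…⊗ω_{tₙ}(f) denotes the product state applied to the replica observable f. -/
/-!
Write `c(σ,τ) = ∑_X a_X σ_X τ_X` with `a_X = Δ_X² / |Λ'|`. Expanding both factors of every replica
term as a double sum over `X, Y` and summing out each replica independently, the four terms become
`∑_{X,Y} a_X a_Y` times `ω_t(σ_Xσ_Y) ω_s(σ_Xσ_Y)`, `ω_s(σ_X) ω_t(σ_Xσ_Y) ω_s(σ_Y)`,
`ω_t(σ_X) ω_s(σ_Xσ_Y) ω_t(σ_Y)` and `ω_t(σ_X) ω_s(σ_X) ω_s(σ_Y) ω_t(σ_Y)`, which is exactly the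
expansion of the product of the two truncated correlations.
-/

open MeasureTheory Real Finset
open scoped NNReal

noncomputable section

namespace InteractionFlip

variable {ι : Type*} [DecidableEq ι]

/-- The covariance `C_S(σ,τ) = ∑_{∅ ≠ X ⊆ S} Δ_X² σ_X τ_X`. -/
def covOn {Λ : Finset ι} (Δ2 : Finset ι → ℝ≥0) (S : Finset ι) (σ τ : ↥Λ → Bool) : ℝ :=
  ∑ X ∈ S.powerset.erase ∅, (Δ2 X : ℝ) * sigmaX σ X * sigmaX τ X

end InteractionFlip

open InteractionFlip

section GramKernel

variable {Ω β : Type*} [Fintype Ω] (S : Finset β) (a : β → ℝ) (φ : Ω → β → ℝ)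

def gramKernel (σ τ : Ω) : ℝ := ∑ X ∈ S, a X * φ σ X * φ τ X

theorem sum_gramKernel_sq_mul (u v : Ω → ℝ) :
    ∑ σ, ∑ τ, gramKernel S a φ σ τ ^ 2 * u σ * v τ =
      ∑ X ∈ S, ∑ Y ∈ S, a X * a Y * (∑ σ, φ σ X * φ σ Y * u σ) * (∑ τ, φ τ X * φ τ Y * v τ) := by
  calc _ = ∑ X ∈ S, ∑ Y ∈ S, ∑ σ, ∑ τ,
        a X * a Y * (φ σ X * φ σ Y * u σ) * (φ τ X * φ τ Y * v τ) := by
          simp only [gramKernel, sq, sum_mul_sum]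
          simp only [sum_mul, sum_comm (s := (univ : Finset Ω)) (t := S)]
          simp only [mul_comm, mul_left_comm]
    _ = _ := by simp only [← mul_sum, ← sum_mul]

theorem sum_gramKernel_mul_gramKernel_chain (u v w : Ω → ℝ) :
    ∑ σ, ∑ τ, ∑ ρ, gramKernel S a φ σ τ * gramKernel S a φ τ ρ * u σ * v τ * w ρ =
      ∑ X ∈ S, ∑ Y ∈ S, a X * a Y * (∑ σ, φ σ X * u σ) * (∑ τ, φ τ X * φ τ Y * v τ) *
        (∑ ρ, φ ρ Y * w ρ) := by
  calc _ = ∑ X ∈ S, ∑ Y ∈ S, ∑ σ, ∑ τ, ∑ ρ,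
        a X * a Y * (φ σ X * u σ) * (φ τ X * φ τ Y * v τ) * (φ ρ Y * w ρ) := by
          simp only [gramKernel, sum_mul_sum]
          simp only [sum_mul, sum_comm (s := (univ : Finset Ω)) (t := S)]
          simp only [mul_comm, mul_left_comm]
    _ = _ := by simp only [← mul_sum, ← sum_mul]

theorem sum_gramKernel_mul_gramKernel_disjoint (u v w z : Ω → ℝ) :
    ∑ σ, ∑ τ, ∑ ρ, ∑ κ, gramKernel S a φ σ τ * gramKernel S a φ ρ κ * u σ * v τ * w ρ * z κ =
      ∑ X ∈ S, ∑ Y ∈ S, a X * a Y * (∑ σ, φ σ X * u σ) * (∑ τ, φ τ X * v τ) *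
        (∑ ρ, φ ρ Y * w ρ) * (∑ κ, φ κ Y * z κ) := by
  calc _ = ∑ X ∈ S, ∑ Y ∈ S, ∑ σ, ∑ τ, ∑ ρ, ∑ κ,
        a X * a Y * (φ σ X * u σ) * (φ τ X * v τ) * (φ ρ Y * w ρ) * (φ κ Y * z κ) := by
          simp only [gramKernel, sum_mul_sum]
          simp only [sum_mul, sum_comm (s := (univ : Finset Ω)) (t := S)]
          simp only [mul_comm, mul_left_comm]
    _ = _ := by simp only [← mul_sum, ← sum_mul]

theorem gramKernel_replicon_identity (p q : Ω → ℝ) :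
    (∑ σ1, ∑ σ2, gramKernel S a φ σ1 σ2 ^ 2 * p σ1 * q σ2)
      - (∑ σ1, ∑ σ2, ∑ σ3, gramKernel S a φ σ1 σ2 * gramKernel S a φ σ2 σ3 * q σ1 * p σ2 * q σ3)
      - (∑ σ1, ∑ σ2, ∑ σ3, gramKernel S a φ σ1 σ2 * gramKernel S a φ σ2 σ3 * p σ1 * q σ2 * p σ3)
      + (∑ σ1, ∑ σ2, ∑ σ3, ∑ σ4,
          gramKernel S a φ σ1 σ2 * gramKernel S a φ σ3 σ4 * p σ1 * q σ2 * q σ3 * p σ4) =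
    ∑ X ∈ S, ∑ Y ∈ S, a X * a Y
      * ((∑ σ, φ σ X * φ σ Y * p σ) - (∑ σ, φ σ X * p σ) * (∑ σ, φ σ Y * p σ))
      * ((∑ σ, φ σ X * φ σ Y * q σ) - (∑ σ, φ σ X * q σ) * (∑ σ, φ σ Y * q σ)) := by
  rw [sum_gramKernel_sq_mul, sum_gramKernel_mul_gramKernel_chain,
    sum_gramKernel_mul_gramKernel_chain, sum_gramKernel_mul_gramKernel_disjoint]
  simp only [← sum_sub_distrib, ← sum_add_distrib]
  refine sum_congr rfl fun X _ => sum_congr rfl fun Y _ => ?_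
  ring

end GramKernel

theorem covOn_div_eq_gramKernel {ι : Type*} [DecidableEq ι] {Λ : Finset ι} (Δ2 : Finset ι → ℝ≥0)
    (S : Finset ι) (σ τ : ↥Λ → Bool) (c : ℝ) :
    covOn Δ2 S σ τ / c = gramKernel (S.powerset.erase ∅) (fun X => (Δ2 X : ℝ) / c) sigmaX σ τ := by
  rw [covOn, gramKernel, sum_div]
  refine sum_congr rfl fun X _ => ?_
  ring

theorem statement18_general
    {ι : Type*} [DecidableEq ι]
    (Λ Λ' : Finset ι)
    (Δ2 : Finset ι → ℝ≥0)
    (p q : (↥Λ → Bool) → ℝ) :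
    (∑ σ1 : ↥Λ → Bool, ∑ σ2 : ↥Λ → Bool,
        (covOn Δ2 Λ' σ1 σ2 / (Λ'.card : ℝ)) ^ 2 * p σ1 * q σ2)
      - (∑ σ1 : ↥Λ → Bool, ∑ σ2 : ↥Λ → Bool, ∑ σ3 : ↥Λ → Bool,
          (covOn Δ2 Λ' σ1 σ2 / (Λ'.card : ℝ)) * (covOn Δ2 Λ' σ2 σ3 / (Λ'.card : ℝ))
            * q σ1 * p σ2 * q σ3)
      - (∑ σ1 : ↥Λ → Bool, ∑ σ2 : ↥Λ → Bool, ∑ σ3 : ↥Λ → Bool,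
          (covOn Δ2 Λ' σ1 σ2 / (Λ'.card : ℝ)) * (covOn Δ2 Λ' σ2 σ3 / (Λ'.card : ℝ))
            * p σ1 * q σ2 * p σ3)
      + (∑ σ1 : ↥Λ → Bool, ∑ σ2 : ↥Λ → Bool, ∑ σ3 : ↥Λ → Bool, ∑ σ4 : ↥Λ → Bool,
          (covOn Δ2 Λ' σ1 σ2 / (Λ'.card : ℝ)) * (covOn Δ2 Λ' σ3 σ4 / (Λ'.card : ℝ))
            * p σ1 * q σ2 * q σ3 * p σ4) =
    (1 / (Λ'.card : ℝ) ^ 2) * ∑ X ∈ Λ'.powerset.erase ∅, ∑ Y ∈ Λ'.powerset.erase ∅,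
      (Δ2 X : ℝ) * (Δ2 Y : ℝ)
        * ((∑ σ : ↥Λ → Bool, sigmaX σ X * sigmaX σ Y * p σ)
            - (∑ σ : ↥Λ → Bool, sigmaX σ X * p σ) * (∑ σ : ↥Λ → Bool, sigmaX σ Y * p σ))
        * ((∑ σ : ↥Λ → Bool, sigmaX σ X * sigmaX σ Y * q σ)
            - (∑ σ : ↥Λ → Bool, sigmaX σ X * q σ) * (∑ σ : ↥Λ → Bool, sigmaX σ Y * q σ)) := by
  simp only [covOn_div_eq_gramKernel]
  rw [gramKernel_replicon_identity, mul_sum]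
  refine sum_congr rfl fun X _ => ?_
  rw [mul_sum]
  refine sum_congr rfl fun Y _ => ?_
  ring

/-- truncated-correlation structure of the replicon polynomial.
For any two states `ω_t, ω_s` on `{±1}^Λ` (given by probability weights `p, q`)
and `c(σ,τ) = C_{Λ'}(σ,τ)/|Λ'|`,
`ω_t⊗ω_s(c₁₂²) − ω_s⊗ω_t⊗ω_s(c₁₂c₂₃) − ω_t⊗ω_s⊗ω_t(c₁₂c₂₃) + ω_t⊗ω_s⊗ω_s⊗ω_t(c₁₂c₃₄)`
is the sum of products of truncated correlations. -/
theorem statement18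
    {ι : Type*} [DecidableEq ι]
    (Λ Λ' : Finset ι) (hΛ : Λ.Nonempty) (hsub : Λ' ⊆ Λ)
    (Δ2 : Finset ι → ℝ≥0)
    (p q : (↥Λ → Bool) → ℝ)
    (hp : ∀ σ, 0 ≤ p σ) (hpsum : ∑ σ : ↥Λ → Bool, p σ = 1)
    (hq : ∀ σ, 0 ≤ q σ) (hqsum : ∑ σ : ↥Λ → Bool, q σ = 1) :
    (∑ σ1 : ↥Λ → Bool, ∑ σ2 : ↥Λ → Bool,
        (covOn Δ2 Λ' σ1 σ2 / (Λ'.card : ℝ)) ^ 2 * p σ1 * q σ2)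
      - (∑ σ1 : ↥Λ → Bool, ∑ σ2 : ↥Λ → Bool, ∑ σ3 : ↥Λ → Bool,
          (covOn Δ2 Λ' σ1 σ2 / (Λ'.card : ℝ)) * (covOn Δ2 Λ' σ2 σ3 / (Λ'.card : ℝ))
            * q σ1 * p σ2 * q σ3)
      - (∑ σ1 : ↥Λ → Bool, ∑ σ2 : ↥Λ → Bool, ∑ σ3 : ↥Λ → Bool,
          (covOn Δ2 Λ' σ1 σ2 / (Λ'.card : ℝ)) * (covOn Δ2 Λ' σ2 σ3 / (Λ'.card : ℝ))
            * p σ1 * q σ2 * p σ3)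
      + (∑ σ1 : ↥Λ → Bool, ∑ σ2 : ↥Λ → Bool, ∑ σ3 : ↥Λ → Bool, ∑ σ4 : ↥Λ → Bool,
          (covOn Δ2 Λ' σ1 σ2 / (Λ'.card : ℝ)) * (covOn Δ2 Λ' σ3 σ4 / (Λ'.card : ℝ))
            * p σ1 * q σ2 * q σ3 * p σ4) =
    (1 / (Λ'.card : ℝ) ^ 2) * ∑ X ∈ Λ'.powerset.erase ∅, ∑ Y ∈ Λ'.powerset.erase ∅,
      (Δ2 X : ℝ) * (Δ2 Y : ℝ)
        * ((∑ σ : ↥Λ → Bool, sigmaX σ X * sigmaX σ Y * p σ)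
            - (∑ σ : ↥Λ → Bool, sigmaX σ X * p σ) * (∑ σ : ↥Λ → Bool, sigmaX σ Y * p σ))
        * ((∑ σ : ↥Λ → Bool, sigmaX σ X * sigmaX σ Y * q σ)
            - (∑ σ : ↥Λ → Bool, sigmaX σ X * q σ) * (∑ σ : ↥Λ → Bool, sigmaX σ Y * q σ)) :=
  statement18_general Λ Λ' Δ2 p q
end
end
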